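/- arXiv:1809.07181 — 3 statements merged into one kernel-verified Lean document; each statement's English description precedes it below -/
import Mathlib

section
/- If A and B are nonempty proximal subsets of a Hilbert space H and x is a fixed point of the Douglas–Rachford operator T_{A,B} = (1/2)(Id + R_B R_A), then P_A(x) belongs to A ∩ B. -/
/-- If `A` and `B` are nonempty proximal subsets of a Hilbert space and `x` is a fixed
point of the Douglas–Rachford operator `T_{A,B} = (1/2)(Id + R_B R_A)`, then
`P_A x ∈ A ∩ B`. -/
theorem stmt0 {H : Type*} [NormedAddCommGroup H] [InnerProductSpace ℝ H] [CompleteSpace H]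
    (A B : Set H) (hA : A.Nonempty) (hB : B.Nonempty)
    (hAc : IsClosed A) (hBc : IsClosed B)
    (PA PB : H → H)
    (hPA : ∀ x, PA x ∈ A ∧ ∀ c ∈ A, ‖x - PA x‖ ≤ ‖x - c‖)
    (hPB : ∀ x, PB x ∈ B ∧ ∀ c ∈ B, ‖x - PB x‖ ≤ ‖x - c‖)
    (RA RB T : H → H)
    (hRA : ∀ y, RA y = (2 : ℝ) • PA y - y)
    (hRB : ∀ y, RB y = (2 : ℝ) • PB y - y)
    (hT : ∀ y, T y = (2 : ℝ)⁻¹ • (y + RB (RA y)))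
    (x : H) (hx : T x = x) :
    PA x ∈ A ∩ B := by
  have h1 : RB (RA x) = x := by
    have := hT x
    rw [hx] at this
    have h2 : (2 : ℝ) • x = (2 : ℝ) • ((2 : ℝ)⁻¹ • (x + RB (RA x))) := by rw [← this]
    rw [smul_smul] at h2
    norm_num at h2
    have : RB (RA x) = (2:ℝ) • x - x := by rw [h2]; abel
    rw [this, two_smul]; abel
  have h3 : PB (RA x) = PA x := by
    have := hRB (RA x)
    rw [h1, hRA x] at this
    have h2 : (2:ℝ) • PB (RA x) = (2:ℝ) • PA x := by
      rw [hRA x]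
      have h := this.symm
      rw [sub_eq_iff_eq_add] at h
      rw [h]; abel
    have := smul_right_injective H (two_ne_zero (α := ℝ)) h2
    exact this
  exact ⟨(hPA x).1, h3 ▸ (hPB (RA x)).1⟩
end

section
/- Let A and B be nonempty closed convex subsets of a Hilbert space H with A ∩ B ≠ ∅. Then for any x₀ ∈ H, the Douglas–Rachford iterates x_{n+1} := T_{A,B}(x_n) converge weakly to a fixed point x of T_{A,B}, and P_A(x) ∈ A ∩ B. -/
/-!
Projections onto convex sets are firmly nonexpansive, so the reflections `2 P - id` are
nonexpansive and `T` is the midpoint average of `id` and the nonexpansive map `S = R_B ∘ R_A`,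
every point of `A ∩ B` being a fixed point of `S`. Along the iteration of such an average the
distance to each fixed point of `S` decreases (Fejér monotonicity), and the decrease controls
`‖x_n - S x_n‖²`, which therefore tends to `0`. Weak cluster points of the bounded sequence exist
by Banach–Alaoglu and are fixed points of `S` by demiclosedness of `id - S`; by Opial's argument
there is only one of them. Finally `S x = x` unfolds to `P_B (R_A x) = P_A x`, so `P_A x ∈ B`.
-/

open Filter Topology Function
open scoped RealInnerProductSpace

section

variable {H : Type*} [NormedAddCommGroup H]

def IsMetricProjection (K : Set H) (P : H → H) : Prop :=
  ∀ x, P x ∈ K ∧ ∀ c ∈ K, ‖x - P x‖ ≤ ‖x - c‖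

lemma IsMetricProjection.apply_eq_self {K : Set H} {P : H → H} (hP : IsMetricProjection K P)
    {x : H} (hx : x ∈ K) : P x = x := by
  have := (hP x).2 x hx
  rw [sub_self, norm_zero, norm_le_zero_iff, sub_eq_zero] at this
  exact this.symm

variable [InnerProductSpace ℝ H]

namespace IsMetricProjection

variable {K : Set H} {P : H → H}

lemma inner_sub_le_zero (hK : Convex ℝ K) (hP : IsMetricProjection K P) (x : H) {c : H}
    (hc : c ∈ K) : ⟪x - P x, c - P x⟫ ≤ 0 := by
  obtain ⟨hPx, hmin⟩ := hP x
  have : Nonempty K := ⟨⟨P x, hPx⟩⟩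
  refine (norm_eq_iInf_iff_real_inner_le_zero hK hPx).mp (le_antisymm ?_ ?_) c hc
  · exact le_ciInf fun c => hmin c c.2
  · exact ciInf_le ⟨0, Set.forall_mem_range.2 fun _ => norm_nonneg _⟩ (⟨P x, hPx⟩ : K)

lemma norm_sub_sq_le_inner (hK : Convex ℝ K) (hP : IsMetricProjection K P) (a b : H) :
    ‖P a - P b‖ ^ 2 ≤ ⟪a - b, P a - P b⟫ := by
  have ha := hP.inner_sub_le_zero hK a (hP b).1
  have hb := hP.inner_sub_le_zero hK b (hP a).1
  rw [← real_inner_self_eq_norm_sq]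
  have : ⟪a - P a, P b - P a⟫ + ⟪b - P b, P a - P b⟫ =
      ⟪P a - P b, P a - P b⟫ - ⟪a - b, P a - P b⟫ := by
    simp only [inner_sub_left, inner_sub_right, real_inner_comm]; ring
  linarith

lemma lipschitzWith_two_smul_sub (hK : Convex ℝ K) (hP : IsMetricProjection K P) :
    LipschitzWith 1 fun y => (2 : ℝ) • P y - y := by
  refine lipschitzWith_iff_norm_sub_le.2 fun a b => ?_
  have hfirm := hP.norm_sub_sq_le_inner hK a b
  have key : ‖((2 : ℝ) • P a - a) - ((2 : ℝ) • P b - b)‖ ^ 2 ≤ ‖a - b‖ ^ 2 := by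
    rw [show ((2 : ℝ) • P a - a) - ((2 : ℝ) • P b - b) = (2 : ℝ) • (P a - P b) - (a - b) by module,
      norm_sub_sq_real, norm_smul, real_inner_smul_left, real_inner_comm, Real.norm_ofNat]
    nlinarith
  rw [NNReal.coe_one, one_mul]
  exact pow_le_pow_iff_left₀ (norm_nonneg _) (norm_nonneg _) two_ne_zero |>.1 key

end IsMetricProjection

variable {ι : Type*}

def WeakTendsto (u : ι → H) (l : Filter ι) (x : H) : Prop :=
  ∀ v : H, Tendsto (fun i => ⟪v, u i⟫) l (𝓝 ⟪v, x⟫)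

lemma weakTendsto_of_forall_ultrafilter {u : ι → H} {l : Filter ι} {x : H}
    (h : ∀ W : Ultrafilter ι, ↑W ≤ l → WeakTendsto u W x) : WeakTendsto u l x :=
  fun v => tendsto_iff_ultrafilter _ _ _ |>.2 fun W hW => h W hW v

lemma WeakTendsto.tendsto_apply [CompleteSpace H] {u : ι → H} {l : Filter ι} {x : H}
    (h : WeakTendsto u l x) (f : StrongDual ℝ H) : Tendsto (fun i => f (u i)) l (𝓝 (f x)) := by
  simpa only [InnerProductSpace.toDual_symm_apply] using h ((InnerProductSpace.toDual ℝ H).symm f)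

lemma exists_weakTendsto_ultrafilter [CompleteSpace H] {u : ι → H} {M : ℝ}
    (hbdd : ∀ i, ‖u i‖ ≤ M) (W : Ultrafilter ι) : ∃ x, WeakTendsto u W x := by
  -- Banach–Alaoglu, applied to the Riesz representatives of the `u i`.
  let φ : ι → WeakDual ℝ H := fun i => StrongDual.toWeakDual (InnerProductSpace.toDual ℝ H (u i))
  have hφ : ∀ i, φ i ∈ WeakDual.toStrongDual ⁻¹' Metric.closedBall 0 M := fun i => by
    simpa [φ] using hbdd i
  obtain ⟨g, -, hg⟩ := (WeakDual.isCompact_closedBall (𝕜 := ℝ) 0 M).ultrafilter_le_nhds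
    (W.map φ) (le_principal_iff.2 (Ultrafilter.mem_map.2 (univ_mem' hφ)))
  refine ⟨(InnerProductSpace.toDual ℝ H).symm (WeakDual.toStrongDual g), fun v => ?_⟩
  rw [real_inner_comm, InnerProductSpace.toDual_symm_apply]
  refine ((WeakDual.eval_continuous v).tendsto g |>.comp hg).congr fun i => ?_
  simp [φ, real_inner_comm]

lemma norm_sub_sq_sub_norm_sub_sq (z x y : H) :
    ‖z - y‖ ^ 2 - ‖z - x‖ ^ 2 = 2 * ⟪x - y, z⟫ + (‖y‖ ^ 2 - ‖x‖ ^ 2) := by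
  rw [norm_sub_sq_real, norm_sub_sq_real, inner_sub_left, real_inner_comm x, real_inner_comm y]
  ring

lemma WeakTendsto.tendsto_norm_sub_sq_sub {u : ι → H} {l : Filter ι} {x : H}
    (h : WeakTendsto u l x) (y : H) :
    Tendsto (fun i => ‖u i - y‖ ^ 2 - ‖u i - x‖ ^ 2) l (𝓝 (‖x - y‖ ^ 2)) := by
  have hlim := ((h (x - y)).const_mul 2).add_const (‖y‖ ^ 2 - ‖x‖ ^ 2)
  rw [← norm_sub_sq_sub_norm_sub_sq, sub_self, norm_zero, zero_pow two_ne_zero, sub_zero] at hlim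
  simpa only [norm_sub_sq_sub_norm_sub_sq] using hlim

lemma WeakTendsto.isFixedPt_of_tendsto_sub {u : ι → H} {l : Filter ι} [l.NeBot] {x : H}
    {M : ℝ} {S : H → H} (hS : LipschitzWith 1 S) (hbdd : ∀ i, ‖u i‖ ≤ M)
    (hx : WeakTendsto u l x) (hreg : Tendsto (fun i => u i - S (u i)) l (𝓝 0)) :
    IsFixedPt S x := by
  set ε := fun i => ‖u i - S (u i)‖
  have hε : Tendsto ε l (𝓝 0) := tendsto_zero_iff_norm_tendsto_zero.1 hreg
  have hbound (i : ι) : ‖u i - S x‖ ^ 2 - ‖u i - x‖ ^ 2 ≤ ε i ^ 2 + 2 * ε i * (M + ‖x‖) := by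
    have hS' : ‖S (u i) - S x‖ ≤ ‖u i - x‖ := by
      simpa only [NNReal.coe_one, one_mul] using (lipschitzWith_iff_norm_sub_le.1 hS) (u i) x
    have htri : ‖u i - S x‖ ≤ ε i + ‖u i - x‖ :=
      (norm_sub_le_norm_sub_add_norm_sub _ _ _).trans (add_le_add le_rfl hS')
    have hC : ‖u i - x‖ ≤ M + ‖x‖ := (norm_sub_le _ _).trans (by linarith [hbdd i])
    nlinarith [norm_nonneg (u i - S x), norm_nonneg (u i - x), norm_nonneg (u i - S (u i))]
  have hupper : Tendsto (fun i => ε i ^ 2 + 2 * ε i * (M + ‖x‖)) l (𝓝 0) := by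
    simpa using (hε.pow 2).add ((hε.const_mul 2).mul_const (M + ‖x‖))
  have hsq : ‖x - S x‖ ^ 2 ≤ 0 :=
    le_of_tendsto_of_tendsto' (hx.tendsto_norm_sub_sq_sub _) hupper hbound
  exact (sub_eq_zero.1 (norm_eq_zero.1 (by nlinarith [norm_nonneg (x - S x)]))).symm

lemma WeakTendsto.eq_of_tendsto_norm_sub {u : ι → H} {l l₁ l₂ : Filter ι} [l₁.NeBot] [l₂.NeBot]
    {x y : H} {r s : ℝ} (hx : WeakTendsto u l₁ x) (hy : WeakTendsto u l₂ y) (h₁ : l₁ ≤ l)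
    (h₂ : l₂ ≤ l) (hr : Tendsto (fun i => ‖u i - x‖) l (𝓝 r))
    (hs : Tendsto (fun i => ‖u i - y‖) l (𝓝 s)) : x = y := by
  -- `‖u i - y‖² - ‖u i - x‖²` is affine in `u i`: its limit is read off at both cluster points.
  have hD : Tendsto (fun i => ‖u i - y‖ ^ 2 - ‖u i - x‖ ^ 2) l (𝓝 (s ^ 2 - r ^ 2)) :=
    (hs.pow 2).sub (hr.pow 2)
  have e₁ : ‖x - y‖ ^ 2 = s ^ 2 - r ^ 2 :=
    tendsto_nhds_unique (hx.tendsto_norm_sub_sq_sub y) (hD.mono_left h₁)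
  have e₂ : ‖y - x‖ ^ 2 = -(s ^ 2 - r ^ 2) :=
    tendsto_nhds_unique (hy.tendsto_norm_sub_sq_sub x) (by simpa using (hD.mono_left h₂).neg)
  rw [norm_sub_rev] at e₂
  exact sub_eq_zero.1 (norm_eq_zero.1 (by nlinarith [norm_nonneg (x - y)]))

theorem exists_weakTendsto_of_tendsto_norm_sub [CompleteSpace H] {u : ι → H} {l : Filter ι}
    [l.NeBot] {M : ℝ} (hbdd : ∀ i, ‖u i‖ ≤ M) {F : Set H}
    (hconv : ∀ w ∈ F, ∃ r, Tendsto (fun i => ‖u i - w‖) l (𝓝 r))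
    (hclust : ∀ (W : Ultrafilter ι) x, ↑W ≤ l → WeakTendsto u W x → x ∈ F) :
    ∃ x ∈ F, WeakTendsto u l x := by
  have cluster_mem (W : Ultrafilter ι) (hW : ↑W ≤ l) : ∃ x ∈ F, WeakTendsto u W x := by
    obtain ⟨x, hx⟩ := exists_weakTendsto_ultrafilter hbdd W
    exact ⟨x, hclust W x hW hx, hx⟩
  obtain ⟨x, hxF, hx⟩ := cluster_mem (Ultrafilter.of l) (Ultrafilter.of_le l)
  refine ⟨x, hxF, weakTendsto_of_forall_ultrafilter fun W hW => ?_⟩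
  obtain ⟨y, hyF, hy⟩ := cluster_mem W hW
  obtain ⟨r, hr⟩ := hconv x hxF
  obtain ⟨s, hs⟩ := hconv y hyF
  rwa [hx.eq_of_tendsto_norm_sub hy (Ultrafilter.of_le l) hW hr hs]

lemma norm_midpoint_sub_sq_add_le {S : H → H} (hS : LipschitzWith 1 S) {w : H}
    (hw : IsFixedPt S w) (x : H) :
    ‖(2 : ℝ)⁻¹ • (x + S x) - w‖ ^ 2 + ‖x - S x‖ ^ 2 / 4 ≤ ‖x - w‖ ^ 2 := by
  have hSx : ‖S x - w‖ ≤ ‖x - w‖ := by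
    simpa [hw.eq] using (lipschitzWith_iff_norm_sub_le.1 hS) x w
  have hpar := parallelogram_law_with_norm ℝ (x - w) (S x - w)
  rw [sub_sub_sub_cancel_right] at hpar
  rw [show (2 : ℝ)⁻¹ • (x + S x) - w = (2 : ℝ)⁻¹ • ((x - w) + (S x - w)) by module,
    norm_smul, norm_inv, Real.norm_ofNat]
  nlinarith [norm_nonneg (S x - w), norm_nonneg (x - w)]

theorem exists_isFixedPt_weakTendsto_of_midpoint_iterate [CompleteSpace H] {S : H → H}
    (hS : LipschitzWith 1 S) {z : H} (hz : IsFixedPt S z) {u : ℕ → H}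
    (hu : ∀ n, u (n + 1) = (2 : ℝ)⁻¹ • (u n + S (u n))) :
    ∃ x, IsFixedPt S x ∧ WeakTendsto u atTop x := by
  have hfejer (w : H) (hw : IsFixedPt S w) (n : ℕ) :
      ‖u (n + 1) - w‖ ^ 2 + ‖u n - S (u n)‖ ^ 2 / 4 ≤ ‖u n - w‖ ^ 2 :=
    hu n ▸ norm_midpoint_sub_sq_add_le hS hw (u n)
  have hanti (w : H) (hw : IsFixedPt S w) : Antitone fun n => ‖u n - w‖ :=
    antitone_nat_of_succ_le fun n => (pow_le_pow_iff_left₀ (norm_nonneg _) (norm_nonneg _)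
      two_ne_zero).1 (by nlinarith [hfejer w hw n, sq_nonneg ‖u n - S (u n)‖])
  have hconv (w : H) (hw : IsFixedPt S w) : ∃ r, Tendsto (fun n => ‖u n - w‖) atTop (𝓝 r) :=
    ⟨_, tendsto_atTop_ciInf (hanti w hw) ⟨0, Set.forall_mem_range.2 fun _ => norm_nonneg _⟩⟩
  have hbdd (n : ℕ) : ‖u n‖ ≤ ‖u 0 - z‖ + ‖z‖ :=
    (norm_le_norm_sub_add _ z).trans (by linarith [hanti z hz n.zero_le])
  have hreg : Tendsto (fun n => u n - S (u n)) atTop (𝓝 0) := by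
    obtain ⟨r, hr⟩ := hconv z hz
    have hdiff : Tendsto (fun n => 4 * (‖u n - z‖ ^ 2 - ‖u (n + 1) - z‖ ^ 2)) atTop (𝓝 0) := by
      simpa using ((hr.pow 2).sub ((hr.comp (tendsto_add_atTop_nat 1)).pow 2)).const_mul 4
    have hsq : Tendsto (fun n => ‖u n - S (u n)‖ ^ 2) atTop (𝓝 0) :=
      squeeze_zero (fun n => by positivity) (fun n => by linarith [hfejer z hz n]) hdiff
    refine tendsto_zero_iff_norm_tendsto_zero.2 ?_
    simpa [Real.sqrt_sq (norm_nonneg _)] using hsq.sqrt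
  exact exists_weakTendsto_of_tendsto_norm_sub hbdd hconv
    fun W x hW hx => hx.isFixedPt_of_tendsto_sub hS hbdd (hreg.mono_left hW)

end

theorem stmt7_general {H : Type*} [NormedAddCommGroup H] [InnerProductSpace ℝ H] [CompleteSpace H]
    (A B : Set H) (hAB : (A ∩ B).Nonempty)
    (hAv : Convex ℝ A) (hBv : Convex ℝ B)
    (PA PB : H → H)
    (hPA : ∀ x, PA x ∈ A ∧ ∀ c ∈ A, ‖x - PA x‖ ≤ ‖x - c‖)
    (hPB : ∀ x, PB x ∈ B ∧ ∀ c ∈ B, ‖x - PB x‖ ≤ ‖x - c‖)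
    (RA RB T : H → H)
    (hRA : ∀ y, RA y = (2 : ℝ) • PA y - y)
    (hRB : ∀ y, RB y = (2 : ℝ) • PB y - y)
    (hT : ∀ y, T y = (2 : ℝ)⁻¹ • (y + RB (RA y)))
    (seq : ℕ → H)
    (hseq : ∀ n, seq (n + 1) = T (seq n)) :
    ∃ x : H, T x = x ∧ PA x ∈ A ∩ B ∧
      ∀ f : H →L[ℝ] ℝ, Filter.Tendsto (fun n => f (seq n)) Filter.atTop (nhds (f x)) := by
  obtain ⟨z, hzA, hzB⟩ := hAB
  have hS : LipschitzWith 1 (RB ∘ RA) := by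
    rw [funext hRA, funext hRB]
    simpa only [mul_one] using (IsMetricProjection.lipschitzWith_two_smul_sub hBv hPB).comp
      (IsMetricProjection.lipschitzWith_two_smul_sub hAv hPA)
  have hz : IsFixedPt (RB ∘ RA) z := by
    have hRAz : RA z = z := by rw [hRA, IsMetricProjection.apply_eq_self hPA hzA]; module
    have hRBz : RB z = z := by rw [hRB, IsMetricProjection.apply_eq_self hPB hzB]; module
    rw [IsFixedPt, comp_apply, hRAz, hRBz]
  obtain ⟨x, hx, hweak⟩ := exists_isFixedPt_weakTendsto_of_midpoint_iterate hS hz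
    (u := seq) fun n => hseq n ▸ hT (seq n)
  have hPBx : PB (RA x) = PA x := by
    have h : (2 : ℝ) • PB (RA x) - ((2 : ℝ) • PA x - x) = x := by rw [← hRA, ← hRB]; exact hx
    exact smul_right_injective H (two_ne_zero' ℝ) (by linear_combination (norm := module) h)
  refine ⟨x, ?_, ⟨(hPA x).1, hPBx ▸ (hPB (RA x)).1⟩, hweak.tendsto_apply⟩
  rw [hT, show RB (RA x) = x from hx]
  module

/-- For nonempty closed convex `A`, `B` with `A ∩ B ≠ ∅`, the Douglas–Rachford
iterates converge weakly to a fixed point `x` of `T_{A,B}`, with `P_A x ∈ A ∩ B`. -/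
theorem stmt7 {H : Type*} [NormedAddCommGroup H] [InnerProductSpace ℝ H] [CompleteSpace H]
    (A B : Set H) (hAB : (A ∩ B).Nonempty)
    (hAc : IsClosed A) (hBc : IsClosed B) (hAv : Convex ℝ A) (hBv : Convex ℝ B)
    (PA PB : H → H)
    (hPA : ∀ x, PA x ∈ A ∧ ∀ c ∈ A, ‖x - PA x‖ ≤ ‖x - c‖)
    (hPB : ∀ x, PB x ∈ B ∧ ∀ c ∈ B, ‖x - PB x‖ ≤ ‖x - c‖)
    (RA RB T : H → H)
    (hRA : ∀ y, RA y = (2 : ℝ) • PA y - y)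
    (hRB : ∀ y, RB y = (2 : ℝ) • PB y - y)
    (hT : ∀ y, T y = (2 : ℝ)⁻¹ • (y + RB (RA y)))
    (x₀ : H) (seq : ℕ → H) (hseq0 : seq 0 = x₀)
    (hseq : ∀ n, seq (n + 1) = T (seq n)) :
    ∃ x : H, T x = x ∧ PA x ∈ A ∩ B ∧
      ∀ f : H →L[ℝ] ℝ, Filter.Tendsto (fun n => f (seq n)) Filter.atTop (nhds (f x)) :=
  stmt7_general A B hAB hAv hBv PA PB hPA hPB RA RB T hRA hRB hT seq hseq
end

section
/- Let A, B be nonempty closed convex subsets of a Hilbert space H. The reflection R_A maps the fixed point set Fix T_{A,B} bijectively onto Fix T_{B,A}, with inverse given by R_B restricted to Fix T_{B,A}. -/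
/-- The reflection `R_A` maps `Fix T_{A,B}` bijectively onto `Fix T_{B,A}`, with
inverse given by `R_B`. -/
theorem stmt13 {H : Type*} [NormedAddCommGroup H] [InnerProductSpace ℝ H] [CompleteSpace H]
    (A B : Set H) (hAB : (A ∩ B).Nonempty)
    (hAc : IsClosed A) (hBc : IsClosed B) (hAv : Convex ℝ A) (hBv : Convex ℝ B)
    (PA PB : H → H)
    (hPA : ∀ x, PA x ∈ A ∧ ∀ c ∈ A, ‖x - PA x‖ ≤ ‖x - c‖)
    (hPB : ∀ x, PB x ∈ B ∧ ∀ c ∈ B, ‖x - PB x‖ ≤ ‖x - c‖)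
    (RA RB TAB TBA : H → H)
    (hRA : ∀ y, RA y = (2 : ℝ) • PA y - y)
    (hRB : ∀ y, RB y = (2 : ℝ) • PB y - y)
    (hTAB : ∀ y, TAB y = (2 : ℝ)⁻¹ • (y + RB (RA y)))
    (hTBA : ∀ y, TBA y = (2 : ℝ)⁻¹ • (y + RA (RB y))) :
    Set.BijOn RA {x | TAB x = x} {x | TBA x = x} ∧
      Set.InvOn RB RA {x | TAB x = x} {x | TBA x = x} := by
  have key : ∀ (T S S' : H → H), (∀ y, T y = (2 : ℝ)⁻¹ • (y + S' (S y))) →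
      ∀ x, T x = x ↔ S' (S x) = x := by
    intro T S S' hT x
    rw [hT]
    constructor
    · intro h
      have h2 : (2 : ℝ) • ((2 : ℝ)⁻¹ • (x + S' (S x))) = (2 : ℝ) • x :=
        congrArg _ h
      rw [smul_smul] at h2
      norm_num [two_smul] at h2
      exact h2
    · intro h
      rw [h, ← two_smul ℝ, smul_smul]
      norm_num
  have h1 := key TAB RA RB hTAB
  have h2 := key TBA RB RA hTBA
  have m1 : Set.MapsTo RA {x | TAB x = x} {x | TBA x = x} := by
    intro x hx
    have hx' : RB (RA x) = x := (h1 x).1 hx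
    have : RA (RB (RA x)) = RA x := by rw [hx']
    exact (h2 (RA x)).2 this
  have m2 : Set.MapsTo RB {x | TBA x = x} {x | TAB x = x} := by
    intro x hx
    have hx' : RA (RB x) = x := (h2 x).1 hx
    have : RB (RA (RB x)) = RB x := by rw [hx']
    exact (h1 (RB x)).2 this
  have inv : Set.InvOn RB RA {x | TAB x = x} {x | TBA x = x} :=
    ⟨fun x hx => (h1 x).1 hx, fun y hy => (h2 y).1 hy⟩
  exact ⟨inv.bijOn m1 m2, inv⟩
end
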